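/- Let F be a field, let H ∈ F^{(n−k)×n} be a matrix with columns h_0,…,h_{n−1}, and let 𝒞 = {x ∈ F^n : Hx = 0}. Let E ⊆ {0,…,n−1}, let m ≤ n be a positive integer, and set I = E ∩ {0,…,m−1}. Suppose that for every i ∈ I, h_i does not lie in the linear span of {h_j : j ∈ E, j ≥ i+1}. Then for any two codewords x, y ∈ 𝒞 with x_j = y_j for all j ∉ E, one has x_i = y_i for all i ∈ I; i.e., the code symbols indexed by I are uniquely determined by the unerased code symbols. -/

import Mathlib

/-! The difference `d = x - y` of the two codewords vanishes outside `E` and satisfies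
`∑ⱼ dⱼ hⱼ = 0`. By induction on `i ∈ I`, all `dⱼ` with `j ∈ I`, `j < i` vanish, so
`dᵢ hᵢ` is a combination of the columns `hⱼ` with `j ∈ E`, `j > i`; since `hᵢ` is not in
their span, `dᵢ = 0`. -/

section

variable {ι K V : Type*} [Field K] [AddCommGroup V] [Module K V] [Fintype ι]

theorem coeff_eq_zero_of_notMem_span_of_sum_eq_zero {c : ι → K} {v : ι → V}
    (hc : ∑ j, c j • v j = 0) {i : ι} {S : Set ι} (hS : ∀ j ≠ i, c j ≠ 0 → j ∈ S)
    (hi : v i ∉ Submodule.span K (v '' S)) : c i = 0 := by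
  classical
  by_contra hci
  refine hi ((Submodule.smul_mem_iff _ hci).mp ?_)
  have hsplit : c i • v i = -∑ j ∈ Finset.univ.erase i, c j • v j := by
    rw [eq_neg_iff_add_eq_zero,
      Finset.add_sum_erase _ (fun j => c j • v j) (Finset.mem_univ i), hc]
  rw [hsplit]
  refine Submodule.neg_mem _ (Submodule.sum_mem _ fun j hj => ?_)
  by_cases hcj : c j = 0
  · simp [hcj]
  · exact Submodule.smul_mem _ _ <|
      Submodule.subset_span ⟨j, hS j (Finset.ne_of_mem_erase hj) hcj, rfl⟩

theorem coeff_eq_zero_of_notMem_span_of_gt [LinearOrder ι] {c : ι → K} {v : ι → V}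
    (hc : ∑ j, c j • v j = 0) {E T : Set ι} (hcE : ∀ j ∉ E, c j = 0) (hT : IsLowerSet T)
    (hind : ∀ i ∈ E, i ∈ T → v i ∉ Submodule.span K (v '' {j | j ∈ E ∧ i < j})) :
    ∀ i ∈ E, i ∈ T → c i = 0 := by
  intro i
  induction i using WellFoundedLT.induction with
  | _ i ih =>
    intro hiE hiT
    refine coeff_eq_zero_of_notMem_span_of_sum_eq_zero hc (fun j hji hcj => ?_) (hind i hiE hiT)
    have hjE : j ∈ E := by_contra fun hjE => hcj (hcE j hjE)
    refine ⟨hjE, lt_of_le_of_ne (not_lt.mp fun hji' => hcj ?_) hji.symm⟩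
    exact ih j hji' hjE (hT hji'.le hiT)

end

theorem parity_check_recovery (F : Type) [Field F] (n k m : ℕ)
    (H : Matrix (Fin (n - k)) (Fin n) F) (E : Finset (Fin n))
    (hind : ∀ i ∈ E, (i : ℕ) < m →
      (fun s => H s i) ∉
        Submodule.span F ((fun j => fun s => H s j) '' {j : Fin n | j ∈ E ∧ i < j})) :
    ∀ x y : Fin n → F, H.mulVec x = 0 → H.mulVec y = 0 →
      (∀ j, j ∉ E → x j = y j) →
      ∀ i ∈ E, (i : ℕ) < m → x i = y i := by
  intro x y hx hy hout i hiE him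
  have hsum : ∑ j, (x - y) j • (fun s => H s j) = 0 := by
    have hxy : H.mulVec (x - y) = 0 := by rw [Matrix.mulVec_sub, hx, hy, sub_zero]
    rw [Matrix.mulVec_eq_sum] at hxy
    simp only [op_smul_eq_smul] at hxy
    exact hxy
  have hT : IsLowerSet {j : Fin n | (j : ℕ) < m} := fun a b hba ha =>
    lt_of_le_of_lt (Fin.le_iff_val_le_val.mp hba) ha
  exact sub_eq_zero.mp (coeff_eq_zero_of_notMem_span_of_gt hsum (E := E)
    (fun j hj => sub_eq_zero.mpr (hout j hj)) hT hind i hiE him)
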